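/- Unitary synthesis for QSP without post-selection (main theorem): let H be an n×n Hermitian complex matrix, ψ₀ ∈ ℂ^n a unit vector, K ≥ 1, and z₀, …, z_{K−1} ∈ ℂ. Define recursively unit vectors ψ_{k+1} = exp(iθ_k·Ψ_k) · exp(s_k·[Ψ_k,H]) · ψ_k, where Ψ_k = ψ_kψ_k†, E_k = ⟨ψ_k, Hψ_k⟩, V_k = ⟨ψ_k, H²ψ_k⟩ − E_k², s_k = −(1/√V_k)·arccos( |E_k − z_k| / √(V_k + |E_k − z_k|²) ), and θ_k ∈ ℝ satisfies e^{iθ_k} = (E_k − z_k)/|E_k − z_k|. Assume V_k > 0 and E_k ≠ z_k for every k < K. Then, with p(H) = ∏_{k=0}^{K−1}(H − z_kI) (a monic degree-K polynomial in H, all factors commuting), one has p(H)ψ₀ ≠ 0 and ψ_K = p(H)ψ₀ / ‖p(H)ψ₀‖. -/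

import Mathlib

/-!
Write `v = ψ_k`, `E = ⟨v, Hv⟩` and `w = Hv − E v`, so that `w ⊥ v` and `‖w‖² = V`.
The commutator `[Ψ, H]` sends `v ↦ −w` and `w ↦ V v`: on the plane spanned by `v` and `w / ‖w‖`
it is `√V` times a rotation generator. Hence `exp(s[Ψ, H]) v = cos(s√V) v − sin(s√V) w / √V`,
and the chosen duration turns this into `(|E − z| v + w) / N` with `N = √(V + |E − z|²)`.
The phase `exp(iθΨ)` multiplies the `v`-component by `e^{iθ}` and fixes `w`, which yields
`((E − z) v + w) / N = (H − z) v / ‖(H − z) v‖`. Since applying the next factor to a normalised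
vector only changes it by a positive scalar, induction on `k` gives `ψ_K = p(H)ψ₀ / ‖p(H)ψ₀‖`.
-/

open scoped InnerProductSpace
open Matrix

noncomputable section

/-- The action of a matrix on a vector in `EuclideanSpace ℂ (Fin n)`. -/
def matApp {n : ℕ} (M : Matrix (Fin n) (Fin n) ℂ) (v : EuclideanSpace ℂ (Fin n)) :
    EuclideanSpace ℂ (Fin n) :=
  Matrix.toEuclideanLin M v

/-- The rank-one outer product `ψψ†`. -/
def outerProd {n : ℕ} (v : EuclideanSpace ℂ (Fin n)) : Matrix (Fin n) (Fin n) ℂ :=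
  Matrix.of fun a b => v a * (starRingEnd ℂ) (v b)

/-- Energy mean `E_Ψ = ⟨ψ, Hψ⟩`. -/
def energyMean {n : ℕ} (H : Matrix (Fin n) (Fin n) ℂ) (v : EuclideanSpace ℂ (Fin n)) : ℝ :=
  (⟪v, matApp H v⟫_ℂ).re

/-- Energy variance `V_Ψ = ⟨ψ, H²ψ⟩ − E_Ψ²`. -/
def energyVar {n : ℕ} (H : Matrix (Fin n) (Fin n) ℂ) (v : EuclideanSpace ℂ (Fin n)) : ℝ :=
  (⟪v, matApp (H * H) v⟫_ℂ).re - (energyMean H v) ^ 2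

/-- The step duration `s = −(1/√V)·arccos(|E − z|/√(V + |E − z|²))`. -/
def stepDur {n : ℕ} (H : Matrix (Fin n) (Fin n) ℂ) (v : EuclideanSpace ℂ (Fin n)) (z : ℂ) : ℝ :=
  -(1 / Real.sqrt (energyVar H v))
    * Real.arccos (‖(energyMean H v : ℂ) - z‖
        / Real.sqrt (energyVar H v + ‖(energyMean H v : ℂ) - z‖ ^ 2))

/-- The monic polynomial `p(H) = ∏_{k<K} (H − z_k I)` (all factors commute). -/
def polyProd {n : ℕ} (H : Matrix (Fin n) (Fin n) ℂ) (z : ℕ → ℂ) (K : ℕ) :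
    Matrix (Fin n) (Fin n) ℂ :=
  ((List.range K).map fun k => H - z k • 1).prod

open NormedSpace InnerProductSpace
open Complex (I)

section Banach

variable {F : Type*} [NormedAddCommGroup F] [NormedSpace ℂ F] [CompleteSpace F]

theorem exp_apply_of_apply_eq_smul {T : F →L[ℂ] F} {x : F} {μ : ℂ} (h : T x = μ • x) :
    exp T x = Complex.exp μ • x := by
  have hpow (k : ℕ) : (T ^ k) x = μ ^ k • x := by
    induction k with
    | zero => simp
    | succ k ih => rw [pow_succ', mul_apply_eq_comp, ih, map_smul, h, smul_smul, ← pow_succ]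
  have hT := (exp_series_hasSum_exp' (𝕂 := ℂ) T).mapL (ContinuousLinearMap.apply ℂ F x)
  have hμ := (exp_series_hasSum_exp' (𝕂 := ℂ) μ).smul_const x
  rw [← Complex.exp_eq_exp_ℂ] at hμ
  refine hT.unique ?_
  simpa [hpow, smul_smul] using hμ

theorem exp_apply_of_rotation {T : F →L[ℂ] F} {x y : F} {c : ℂ} (hx : T x = -c • y)
    (hy : T y = c • x) : exp T x = Complex.cos c • x - Complex.sin c • y := by
  have hplus : T (x + I • y) = (c * I) • (x + I • y) := by
    rw [map_add, map_smul, hx, hy]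
    match_scalars <;> ring_nf
    simp [Complex.I_sq]
  have hminus : T (x - I • y) = (-c * I) • (x - I • y) := by
    rw [map_sub, map_smul, hx, hy]
    match_scalars <;> ring_nf
    simp [Complex.I_sq]
  have hx_eq : x = (2 : ℂ)⁻¹ • ((x + I • y) + (x - I • y)) := by module
  rw [hx_eq, map_smul, map_add, exp_apply_of_apply_eq_smul hplus,
    exp_apply_of_apply_eq_smul hminus, Complex.cos, Complex.sin]
  match_scalars <;> ring_nf

theorem exp_smul_apply_of_isIdempotentElem {P : F →L[ℂ] F} (hP : IsIdempotentElem P) (μ : ℂ)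
    (x : F) : exp (μ • P) x = x + (Complex.exp μ - 1) • P x := by
  have hPP : P (P x) = P x := by rw [← mul_apply_eq_comp, hP.eq]
  have hrange : (μ • P) (P x) = μ • P x := by rw [_root_.smul_apply, hPP]
  have hker : (μ • P) (x - P x) = (0 : ℂ) • (x - P x) := by
    rw [_root_.smul_apply, map_sub, hPP]; simp
  rw [show x = P x + (x - P x) by abel, map_add, exp_apply_of_apply_eq_smul hrange,
    exp_apply_of_apply_eq_smul hker, map_add, map_sub, hPP]
  simp only [sub_self, add_zero, Complex.exp_zero, one_smul]
  module

end Banach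

namespace Real

variable {a b : ℝ}

lemma cos_arccos_div_sqrt_sq_add_sq (hb : 0 < b) :
    cos (arccos (b / √(a ^ 2 + b ^ 2))) = b / √(a ^ 2 + b ^ 2) := by
  have hN : 0 < √(a ^ 2 + b ^ 2) := sqrt_pos.mpr (by positivity)
  refine cos_arccos (by linarith [div_nonneg hb.le hN.le]) ((div_le_one hN).mpr ?_)
  exact le_sqrt_of_sq_le (by nlinarith)

lemma sin_arccos_div_sqrt_sq_add_sq (ha : 0 ≤ a) (hb : 0 < b) :
    sin (arccos (b / √(a ^ 2 + b ^ 2))) = a / √(a ^ 2 + b ^ 2) := by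
  have hpos : 0 < a ^ 2 + b ^ 2 := by positivity
  have h : 1 - (b / √(a ^ 2 + b ^ 2)) ^ 2 = (a / √(a ^ 2 + b ^ 2)) ^ 2 := by
    rw [div_pow, div_pow, sq_sqrt hpos.le]
    field_simp
    ring
  rw [sin_arccos, h, sqrt_sq (div_nonneg ha (sqrt_nonneg _))]

end Real

lemma ne_zero_of_exp_mul_I_eq_div_norm {a : ℂ} {θ : ℝ} (h : Complex.exp (I * θ) = a / ‖a‖) :
    a ≠ 0 := by
  rintro rfl
  simp at h

lemma normalize_eq_ofReal_inv_norm_smul {F : Type*} [NormedAddCommGroup F] [NormedSpace ℂ F]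
    (x : F) : NormedSpace.normalize x = (‖x‖ : ℂ)⁻¹ • x := by
  rw [NormedSpace.normalize, RCLike.real_smul_eq_coe_smul (K := ℂ)]
  push_cast
  rfl

section Hilbert

variable {E : Type*} [NormedAddCommGroup E] [InnerProductSpace ℂ E]

def energyDeviation (T : E →L[ℂ] E) (v : E) : E := T v - ⟪v, T v⟫_ℂ • v

variable {T : E →L[ℂ] E} {v : E}

lemma inner_self_energyDeviation (hv : ‖v‖ = 1) : ⟪v, energyDeviation T v⟫_ℂ = 0 := by
  rw [energyDeviation, inner_sub_right, inner_smul_right, inner_self_eq_norm_sq_to_K, hv]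
  simp

lemma apply_eq_smul_add_energyDeviation : T v = ⟪v, T v⟫_ℂ • v + energyDeviation T v := by
  rw [energyDeviation]; abel

lemma sub_smul_one_apply (z : ℂ) :
    (T - z • 1) v = (⟪v, T v⟫_ℂ - z) • v + energyDeviation T v := by
  rw [energyDeviation, _root_.sub_apply, _root_.smul_apply, one_apply_eq_self, sub_smul]
  abel

lemma norm_sub_smul_one_apply_sq (hv : ‖v‖ = 1) (z : ℂ) :
    ‖(T - z • 1) v‖ ^ 2 = ‖⟪v, T v⟫_ℂ - z‖ ^ 2 + ‖energyDeviation T v‖ ^ 2 := by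
  have horth : ⟪(⟪v, T v⟫_ℂ - z) • v, energyDeviation T v⟫_ℂ = 0 := by
    rw [inner_smul_left, inner_self_energyDeviation hv, mul_zero]
  simp only [sub_smul_one_apply, sq,
    norm_add_sq_eq_norm_sq_add_norm_sq_of_inner_eq_zero _ _ horth, norm_smul, hv, mul_one]

lemma commutator_rankOne_apply_self (hv : ‖v‖ = 1) :
    (rankOne ℂ v v * T - T * rankOne ℂ v v) v = -energyDeviation T v := by
  simp [energyDeviation, inner_self_eq_norm_sq_to_K, hv]

lemma commutator_rankOne_apply_energyDeviation (hT : (T : E →ₗ[ℂ] E).IsSymmetric)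
    (hv : ‖v‖ = 1) :
    (rankOne ℂ v v * T - T * rankOne ℂ v v) (energyDeviation T v)
      = ((‖energyDeviation T v‖ ^ 2 : ℝ) : ℂ) • v := by
  have hvw := inner_self_energyDeviation (T := T) hv
  have h : ⟪v, T (energyDeviation T v)⟫_ℂ = ‖energyDeviation T v‖ ^ 2 := by
    calc ⟪v, T (energyDeviation T v)⟫_ℂ = ⟪T v, energyDeviation T v⟫_ℂ := (hT _ _).symm
      _ = ‖energyDeviation T v‖ ^ 2 := by
        rw [apply_eq_smul_add_energyDeviation, inner_add_left, inner_smul_left, hvw,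
          inner_self_eq_norm_sq_to_K]
        simp
  simp [hvw, h]

lemma sub_smul_one_apply_ne_zero (hv : ‖v‖ = 1) {z : ℂ} (hz : ⟪v, T v⟫_ℂ ≠ z) :
    (T - z • 1) v ≠ 0 := by
  intro h
  have hsq := norm_sub_smul_one_apply_sq (T := T) hv z
  rw [h, norm_zero] at hsq
  have : 0 < ‖⟪v, T v⟫_ℂ - z‖ := norm_pos_iff.mpr (sub_ne_zero.mpr hz)
  nlinarith [sq_nonneg ‖energyDeviation T v‖]

variable [CompleteSpace E]

theorem exp_smul_commutator_rankOne_apply (hT : (T : E →ₗ[ℂ] E).IsSymmetric) (hv : ‖v‖ = 1)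
    (s : ℝ) :
    exp ((s : ℂ) • (rankOne ℂ v v * T - T * rankOne ℂ v v)) v
      = (Real.cos (s * ‖energyDeviation T v‖) : ℂ) • v
        - ((Real.sin (s * ‖energyDeviation T v‖) / ‖energyDeviation T v‖ : ℝ) : ℂ)
          • energyDeviation T v := by
  have hAv := commutator_rankOne_apply_self (T := T) hv
  have hAw := commutator_rankOne_apply_energyDeviation hT hv
  generalize energyDeviation T v = w at hAv hAw ⊢
  have hw : ((‖w‖ * ‖w‖⁻¹ : ℝ) : ℂ) • w = w := by
    rcases eq_or_ne w 0 with h | h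
    · simp [h]
    · rw [mul_inv_cancel₀ (norm_ne_zero_iff.mpr h), Complex.ofReal_one, one_smul]
  have hx : ((s : ℂ) • (rankOne ℂ v v * T - T * rankOne ℂ v v)) v
      = -((s * ‖w‖ : ℝ) : ℂ) • (((‖w‖⁻¹ : ℝ) : ℂ) • w) := by
    rw [_root_.smul_apply, hAv]
    conv_lhs => rw [← hw]
    push_cast; module
  have hy : ((s : ℂ) • (rankOne ℂ v v * T - T * rankOne ℂ v v)) (((‖w‖⁻¹ : ℝ) : ℂ) • w)
      = ((s * ‖w‖ : ℝ) : ℂ) • v := by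
    have h : ‖w‖⁻¹ * ‖w‖ ^ 2 = ‖w‖ := by rw [sq, ← mul_assoc, inv_mul_mul_self]
    rw [_root_.smul_apply, map_smul, hAw, smul_smul, smul_smul, mul_assoc, ← Complex.ofReal_mul, h,
      Complex.ofReal_mul]
  rw [exp_apply_of_rotation hx hy, ← Complex.ofReal_cos, ← Complex.ofReal_sin, smul_smul,
    ← Complex.ofReal_mul, div_eq_mul_inv]

def qspStep (T : E →L[ℂ] E) (v : E) (θ s : ℝ) : E :=
  exp ((I * θ) • rankOne ℂ v v) (exp ((s : ℂ) • (rankOne ℂ v v * T - T * rankOne ℂ v v)) v)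

theorem qspStep_eq (hT : (T : E →ₗ[ℂ] E).IsSymmetric) (hv : ‖v‖ = 1) {z : ℂ} {θ s : ℝ}
    (hθ : Complex.exp (I * θ) = (⟪v, T v⟫_ℂ - z) / ‖⟪v, T v⟫_ℂ - z‖)
    (hs : s * ‖energyDeviation T v‖ = -Real.arccos (‖⟪v, T v⟫_ℂ - z‖
      / √(‖energyDeviation T v‖ ^ 2 + ‖⟪v, T v⟫_ℂ - z‖ ^ 2))) :
    qspStep T v θ s = NormedSpace.normalize ((T - z • 1) v) := by
  have hnorm := norm_sub_smul_one_apply_sq (T := T) hv z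
  have hrot := exp_smul_commutator_rankOne_apply hT hv s
  have horth := inner_self_energyDeviation (T := T) hv
  rw [qspStep, normalize_eq_ofReal_inv_norm_smul, sub_smul_one_apply]
  rw [sub_smul_one_apply] at hnorm
  generalize ⟪v, T v⟫_ℂ - z = μ at hθ hs hnorm ⊢
  generalize energyDeviation T v = w at hs hnorm hrot horth ⊢
  have hμ : 0 < ‖μ‖ := norm_pos_iff.mpr (ne_zero_of_exp_mul_I_eq_div_norm hθ)
  set N := √(‖w‖ ^ 2 + ‖μ‖ ^ 2) with hN
  have hNpos : 0 < N := Real.sqrt_pos.mpr (by positivity)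
  have hcos : Real.cos (s * ‖w‖) = ‖μ‖ / N := by
    rw [hs, Real.cos_neg, Real.cos_arccos_div_sqrt_sq_add_sq hμ]
  have hsin : ((Real.sin (s * ‖w‖) / ‖w‖ : ℝ) : ℂ) • w = -((N⁻¹ : ℝ) : ℂ) • w := by
    rcases eq_or_ne w 0 with h | h
    · simp [h]
    · have hw : ‖w‖ ≠ 0 := norm_ne_zero_iff.mpr h
      have : Real.sin (s * ‖w‖) = ‖w‖ * -N⁻¹ := by
        rw [hs, Real.sin_neg, Real.sin_arccos_div_sqrt_sq_add_sq (norm_nonneg _) hμ, ← hN]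
        ring
      rw [this, mul_div_cancel_left₀ _ hw, Complex.ofReal_neg]
  have hnormN : ‖μ • v + w‖ = N := by
    rw [hN, add_comm (‖w‖ ^ 2), ← hnorm, Real.sqrt_sq (norm_nonneg _)]
  rw [hrot, hcos, hsin, exp_smul_apply_of_isIdempotentElem (isIdempotentElem_rankOne_self hv),
    rankOne_apply, hθ, hnormN]
  simp only [inner_sub_right, inner_smul_right, horth, inner_self_eq_norm_sq_to_K, hv]
  have : (‖μ‖ : ℂ) ≠ 0 := by exact_mod_cast hμ.ne'
  match_scalars <;> field_simp
  ring

end Hilbert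

variable {n : ℕ}

lemma matApp_eq_toEuclideanCLM (M : Matrix (Fin n) (Fin n) ℂ) (v : EuclideanSpace ℂ (Fin n)) :
    matApp M v = toEuclideanCLM (𝕜 := ℂ) M v := rfl

lemma toEuclideanCLM_outerProd (v : EuclideanSpace ℂ (Fin n)) :
    toEuclideanCLM (𝕜 := ℂ) (outerProd v) = rankOne ℂ v v := by
  ext1 u
  ext a
  simp [outerProd, Matrix.mulVec, dotProduct, PiLp.inner_apply, Finset.mul_sum, mul_comm,
    mul_left_comm]

lemma toEuclideanCLM_exp (M : Matrix (Fin n) (Fin n) ℂ) :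
    toEuclideanCLM (𝕜 := ℂ) (exp M) = exp (toEuclideanCLM (𝕜 := ℂ) M) :=
  -- `map_exp` wants a normed algebra structure on matrices; any norm inducing the product
  -- topology will do, as `exp` only depends on the topology.
  open scoped Matrix.Norms.Operator in
  map_exp (toEuclideanCLM (n := Fin n) (𝕜 := ℂ)) (LinearMap.continuous_of_finiteDimensional
    (toEuclideanCLM (n := Fin n) (𝕜 := ℂ)).toAlgEquiv.toLinearMap) M

lemma matApp_exp_exp_eq_qspStep (H : Matrix (Fin n) (Fin n) ℂ) (v : EuclideanSpace ℂ (Fin n))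
    (θ s : ℝ) :
    matApp (exp ((I * θ) • outerProd v))
        (matApp (exp ((s : ℂ) • (outerProd v * H - H * outerProd v))) v)
      = qspStep (toEuclideanCLM (𝕜 := ℂ) H) v θ s := by
  simp only [matApp_eq_toEuclideanCLM, toEuclideanCLM_exp, map_smul, map_sub, map_mul,
    toEuclideanCLM_outerProd, qspStep]

variable {H : Matrix (Fin n) (Fin n) ℂ} {v : EuclideanSpace ℂ (Fin n)}

lemma isSymmetric_toEuclideanCLM (hH : H.IsHermitian) :
    ((toEuclideanCLM (𝕜 := ℂ) H : EuclideanSpace ℂ (Fin n) →L[ℂ] EuclideanSpace ℂ (Fin n)) :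
      EuclideanSpace ℂ (Fin n) →ₗ[ℂ] EuclideanSpace ℂ (Fin n)).IsSymmetric :=
  isSymmetric_toEuclideanLin_iff.mpr hH

lemma ofReal_energyMean (hH : H.IsHermitian) :
    (energyMean H v : ℂ) = ⟪v, toEuclideanCLM (𝕜 := ℂ) H v⟫_ℂ :=
  Complex.conj_eq_iff_re.mp <| by
    rw [matApp_eq_toEuclideanCLM, inner_conj_symm]
    exact isSymmetric_toEuclideanCLM hH v v

lemma energyVar_eq (hH : H.IsHermitian) (hv : ‖v‖ = 1) :
    energyVar H v = ‖energyDeviation (toEuclideanCLM (𝕜 := ℂ) H) v‖ ^ 2 := by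
  set T := toEuclideanCLM (𝕜 := ℂ) H
  have hsq : (⟪v, matApp (H * H) v⟫_ℂ).re = ‖T v‖ ^ 2 := by
    have h := isSymmetric_toEuclideanCLM hH v (T v)
    simp only [ContinuousLinearMap.coe_coe] at h
    rw [matApp_eq_toEuclideanCLM, map_mul, mul_apply_eq_comp, ← h, inner_self_eq_norm_sq_to_K]
    norm_cast
  have hpyth := norm_sub_smul_one_apply_sq (T := T) hv 0
  rw [zero_smul, sub_zero, sub_zero, ← ofReal_energyMean hH, Complex.norm_real,
    Real.norm_eq_abs, sq_abs] at hpyth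
  rw [energyVar, hsq, hpyth]
  ring

lemma stepDur_mul_norm_energyDeviation (hH : H.IsHermitian) (hv : ‖v‖ = 1) {z : ℂ}
    (hz : (energyMean H v : ℂ) ≠ z) :
    stepDur H v z * ‖energyDeviation (toEuclideanCLM (𝕜 := ℂ) H) v‖
      = -Real.arccos (‖⟪v, toEuclideanCLM (𝕜 := ℂ) H v⟫_ℂ - z‖
        / √(‖energyDeviation (toEuclideanCLM (𝕜 := ℂ) H) v‖ ^ 2
          + ‖⟪v, toEuclideanCLM (𝕜 := ℂ) H v⟫_ℂ - z‖ ^ 2)) := by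
  rw [ofReal_energyMean hH] at hz
  rw [stepDur, energyVar_eq hH hv, ofReal_energyMean hH, Real.sqrt_sq (norm_nonneg _)]
  rcases eq_or_ne ‖energyDeviation (toEuclideanCLM (𝕜 := ℂ) H) v‖ 0 with h | h
  · have hr : 0 < ‖⟪v, toEuclideanCLM (𝕜 := ℂ) H v⟫_ℂ - z‖ :=
      norm_pos_iff.mpr (sub_ne_zero.mpr hz)
    simp [h, Real.sqrt_sq hr.le, hr.ne']
  · field_simp

lemma matApp_sub_smul_one (H : Matrix (Fin n) (Fin n) ℂ) (z : ℂ) (v : EuclideanSpace ℂ (Fin n)) :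
    matApp (H - z • 1) v = (toEuclideanCLM (𝕜 := ℂ) H - z • 1) v := by
  rw [matApp_eq_toEuclideanCLM, map_sub, map_smul, map_one]

theorem matApp_qsp_step_eq_normalize (hH : H.IsHermitian) (hv : ‖v‖ = 1) {z : ℂ} {θ : ℝ}
    (hθ : Complex.exp (I * θ) = ((energyMean H v : ℂ) - z) / ‖(energyMean H v : ℂ) - z‖) :
    matApp (H - z • 1) v ≠ 0 ∧
      matApp (exp ((I * θ) • outerProd v))
          (matApp (exp ((stepDur H v z : ℂ) • (outerProd v * H - H * outerProd v))) v)
        = NormedSpace.normalize (matApp (H - z • 1) v) := by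
  have hz : (energyMean H v : ℂ) ≠ z := sub_ne_zero.mp (ne_zero_of_exp_mul_I_eq_div_norm hθ)
  have hs := stepDur_mul_norm_energyDeviation hH hv hz
  rw [ofReal_energyMean hH] at hz hθ
  rw [matApp_exp_exp_eq_qspStep, matApp_sub_smul_one]
  exact ⟨sub_smul_one_apply_ne_zero hv hz, qspStep_eq (isSymmetric_toEuclideanCLM hH) hv hθ hs⟩

lemma polyProd_succ (H : Matrix (Fin n) (Fin n) ℂ) (z : ℕ → ℂ) (k : ℕ) :
    polyProd H z (k + 1) = (H - z k • 1) * polyProd H z k := by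
  have hcomm (a b : ℂ) : Commute (H - a • 1) (H - b • 1) :=
    ((Commute.refl H).sub_right ((Commute.one_right H).smul_right b)).sub_left
      ((Commute.one_left _).smul_left a)
  rw [polyProd, List.range_succ, List.map_append, List.prod_append, ← polyProd]
  simp only [List.map_cons, List.map_nil, List.prod_cons, List.prod_nil, mul_one]
  refine (Commute.list_prod_left _ _ fun x hx ↦ ?_).eq
  obtain ⟨j, -, rfl⟩ := List.mem_map.mp hx
  exact hcomm _ _

theorem eq_normalize_matApp_polyProd {z : ℕ → ℂ} {ψ : ℕ → EuclideanSpace ℂ (Fin n)} {K : ℕ}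
    (hψ0 : ‖ψ 0‖ = 1)
    (hstep : ∀ k < K, ‖ψ k‖ = 1 → matApp (H - z k • 1) (ψ k) ≠ 0 ∧
      ψ (k + 1) = NormedSpace.normalize (matApp (H - z k • 1) (ψ k))) :
    ∀ k ≤ K, matApp (polyProd H z k) (ψ 0) ≠ 0 ∧
      ψ k = NormedSpace.normalize (matApp (polyProd H z k) (ψ 0)) := by
  intro k hk
  induction k with
  | zero =>
    have hψ0' : matApp (polyProd H z 0) (ψ 0) = ψ 0 := by
      rw [polyProd, List.range_zero, List.map_nil, List.prod_nil, matApp_eq_toEuclideanCLM,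
        map_one, one_apply_eq_self]
    rw [hψ0', NormedSpace.normalize_eq_self_of_norm_eq_one hψ0]
    exact ⟨norm_ne_zero_iff.mp (by rw [hψ0]; exact one_ne_zero), rfl⟩
  | succ k ih =>
    obtain ⟨hx, hψk⟩ := ih (by omega)
    obtain ⟨hne, hnext⟩ := hstep k (by omega)
      (by rw [hψk]; exact NormedSpace.norm_normalize_eq_one_iff.mpr hx)
    have hfactor : matApp (H - z k • 1) (ψ k)
        = ‖matApp (polyProd H z k) (ψ 0)‖⁻¹ • matApp (polyProd H z (k + 1)) (ψ 0) := by
      rw [hψk, NormedSpace.normalize, polyProd_succ]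
      simp only [matApp_eq_toEuclideanCLM, map_mul, mul_apply_eq_comp,
        ContinuousLinearMap.map_smul_of_tower]
    rw [hfactor] at hne hnext
    refine ⟨fun h ↦ hne (by rw [h, smul_zero]), ?_⟩
    rw [hnext, NormedSpace.normalize_smul_of_pos (inv_pos.mpr (norm_pos_iff.mpr hx))]

theorem qsp_unitary_synthesis_general {n : ℕ}
    (H : Matrix (Fin n) (Fin n) ℂ) (hH : H.IsHermitian)
    (K : ℕ) (z : ℕ → ℂ) (θ : ℕ → ℝ)
    (ψ : ℕ → EuclideanSpace ℂ (Fin n)) (hψ0 : ‖ψ 0‖ = 1)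
    (hθ : ∀ k < K, Complex.exp (Complex.I * (θ k : ℂ))
      = ((energyMean H (ψ k) : ℂ) - z k)
          / (‖(energyMean H (ψ k) : ℂ) - z k‖ : ℂ))
    (hrec : ∀ k < K, ψ (k + 1)
      = matApp (NormedSpace.exp ((Complex.I * (θ k : ℂ)) • outerProd (ψ k)))
          (matApp (NormedSpace.exp
              (((stepDur H (ψ k) (z k) : ℝ) : ℂ)
                • (outerProd (ψ k) * H - H * outerProd (ψ k)))) (ψ k))) :
    matApp (polyProd H z K) (ψ 0) ≠ 0 ∧
    ψ K = (‖matApp (polyProd H z K) (ψ 0)‖ : ℂ)⁻¹ • matApp (polyProd H z K) (ψ 0) := by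
  obtain ⟨hne, hψK⟩ := eq_normalize_matApp_polyProd hψ0
    (fun k hk hψk ↦ hrec k hk ▸ matApp_qsp_step_eq_normalize hH hψk (hθ k hk)) K le_rfl
  exact ⟨hne, by rw [hψK, normalize_eq_ofReal_inv_norm_smul]⟩

/-- Unitary synthesis for QSP without post-selection: the recursion
`ψ_{k+1} = exp(iθ_k Ψ_k)·exp(s_k [Ψ_k, H])·ψ_k` with the stated durations and phases
produces `ψ_K = p(H)ψ₀/‖p(H)ψ₀‖` where `p(H) = ∏_{k<K}(H − z_k I)`. -/
theorem qsp_unitary_synthesis {n : ℕ} (hn : 1 ≤ n)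
    (H : Matrix (Fin n) (Fin n) ℂ) (hH : H.IsHermitian)
    (K : ℕ) (hK : 1 ≤ K) (z : ℕ → ℂ) (θ : ℕ → ℝ)
    (ψ : ℕ → EuclideanSpace ℂ (Fin n)) (hψ0 : ‖ψ 0‖ = 1)
    (hV : ∀ k < K, 0 < energyVar H (ψ k))
    (hEz : ∀ k < K, (energyMean H (ψ k) : ℂ) ≠ z k)
    (hθ : ∀ k < K, Complex.exp (Complex.I * (θ k : ℂ))
      = ((energyMean H (ψ k) : ℂ) - z k)
          / (‖(energyMean H (ψ k) : ℂ) - z k‖ : ℂ))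
    (hrec : ∀ k < K, ψ (k + 1)
      = matApp (NormedSpace.exp ((Complex.I * (θ k : ℂ)) • outerProd (ψ k)))
          (matApp (NormedSpace.exp
              (((stepDur H (ψ k) (z k) : ℝ) : ℂ)
                • (outerProd (ψ k) * H - H * outerProd (ψ k)))) (ψ k))) :
    matApp (polyProd H z K) (ψ 0) ≠ 0 ∧
    ψ K = (‖matApp (polyProd H z K) (ψ 0)‖ : ℂ)⁻¹ • matApp (polyProd H z K) (ψ 0) :=
  qsp_unitary_synthesis_general H hH K z θ ψ hψ0 hθ hrec
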